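/- arXiv:2501.04720 — 3 statements merged into one kernel-verified Lean document; each statement's English description precedes it below -/
import Mathlib

section
/- Let R be a ΔU ring and let a, b ∈ R. Then 1 - a·b ∈ Δ(R) if and only if 1 - b·a ∈ Δ(R). -/
/-- `Δ(R) = {r ∈ R : r + u is a unit for every unit u of R}`. -/
def Delta (R : Type*) [Ring R] : Set R := {r : R | ∀ u : Rˣ, IsUnit (r + (u : R))}

/-- A ring `R` is a ΔU ring if every unit `u` satisfies `u - 1 ∈ Δ(R)`. -/
def IsDeltaU (R : Type*) [Ring R] : Prop := ∀ u : Rˣ, (u : R) - 1 ∈ Delta R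

/-!
In a ΔU ring `Δ(R) = {x : 1 - x is a unit}`, so `1 - ab ∈ Δ(R)` says that `ab` is a unit. This
is symmetric in `a` and `b` as soon as `R` is Dedekind-finite. For that, let `ab = 1` and
`e = 1 - ba`. Then `ea` and `be` are square-zero, hence `ea ∈ Δ(R)` and `1 + be` is a unit.
Since `Δ(R)` is an additive subgroup closed under multiplication by units,
`ea(1 + be) - ea = e` lies in `Δ(R)`, so `ba = 1 - e` is a unit; being idempotent, it is `1`.
-/

theorem IsDedekindFiniteMonoid.isUnit_mul_iff {M : Type*} [Monoid M] [IsDedekindFiniteMonoid M]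
    {a b : M} : IsUnit (a * b) ↔ IsUnit a ∧ IsUnit b := by
  refine ⟨fun ⟨u, hu⟩ => ⟨.of_mul_eq_one (b * ↑u⁻¹) ?_, .of_mul_eq_one_right (↑u⁻¹ * a) ?_⟩,
    fun ⟨ha, hb⟩ => ha.mul hb⟩
  · rw [← mul_assoc, ← hu, Units.mul_inv]
  · rw [mul_assoc, ← hu, Units.inv_mul]

section Delta

variable {R : Type*} [Ring R] {r s : R}

theorem add_mem_delta (hr : r ∈ Delta R) (hs : s ∈ Delta R) : r + s ∈ Delta R := fun u => by
  obtain ⟨v, hv⟩ := hs u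
  rw [add_assoc, ← hv]
  exact hr v

theorem neg_mem_delta (hr : r ∈ Delta R) : -r ∈ Delta R := fun u => by
  simpa [neg_add_eq_sub, add_comm] using (hr (-u)).neg

theorem mul_units_mem_delta (hr : r ∈ Delta R) (w : Rˣ) : r * w ∈ Delta R := fun u => by
  simpa [add_mul, mul_assoc] using (hr (u * w⁻¹)).mul w.isUnit

theorem isUnit_one_sub_of_mem_delta (hr : r ∈ Delta R) : IsUnit (1 - r) := by
  simpa [← sub_eq_add_neg] using (hr (-1)).neg

end Delta

namespace IsDeltaU

variable {R : Type*} [Ring R]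

theorem mem_delta_iff (hR : IsDeltaU R) {x : R} : x ∈ Delta R ↔ IsUnit (1 - x) :=
  ⟨isUnit_one_sub_of_mem_delta, fun ⟨u, hu⟩ => by simpa [hu] using neg_mem_delta (hR u)⟩

theorem mem_delta_of_isNilpotent (hR : IsDeltaU R) {p : R} (hp : IsNilpotent p) : p ∈ Delta R :=
  hR.mem_delta_iff.mpr hp.isUnit_one_sub

theorem isDedekindFiniteMonoid (hR : IsDeltaU R) : IsDedekindFiniteMonoid R where
  mul_eq_one_symm {a b} hab := by
    set e := 1 - b * a with he
    have hae : a * e = 0 := by rw [he, mul_sub, ← mul_assoc, hab, one_mul, mul_one, sub_self]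
    have heb : e * b = 0 := by rw [he, sub_mul, mul_assoc, hab, one_mul, mul_one, sub_self]
    have hee : e * e = e := by
      nth_rewrite 1 [he]
      rw [sub_mul, one_mul, mul_assoc, hae, mul_zero, sub_zero]
    have hea : IsNilpotent (e * a) :=
      ⟨2, by rw [sq, mul_assoc, ← mul_assoc a, hae, zero_mul, mul_zero]⟩
    have hbe : IsNilpotent (b * e) :=
      ⟨2, by rw [sq, mul_assoc, ← mul_assoc e, heb, zero_mul, mul_zero]⟩
    obtain ⟨w, hw⟩ := hbe.isUnit_one_add
    have he_mem : e ∈ Delta R := by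
      have h := add_mem_delta (mul_units_mem_delta (hR.mem_delta_of_isNilpotent hea) w)
        (neg_mem_delta (hR.mem_delta_of_isNilpotent hea))
      convert h using 1
      rw [hw, mul_add, mul_one, add_neg_cancel_comm, mul_assoc, ← mul_assoc a, hab, one_mul, hee]
    have hba : IsUnit (b * a) := by simpa [he] using isUnit_one_sub_of_mem_delta he_mem
    refine hba.mul_left_cancel ?_
    rw [mul_one, mul_assoc, ← mul_assoc a, hab, one_mul]

end IsDeltaU

theorem deltaU_jacobson_lemma (R : Type*) [Ring R] (hR : IsDeltaU R) (a b : R) :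
    1 - a * b ∈ Delta R ↔ 1 - b * a ∈ Delta R := by
  have := hR.isDedekindFiniteMonoid
  rw [hR.mem_delta_iff, hR.mem_delta_iff, sub_sub_cancel, sub_sub_cancel,
    IsDedekindFiniteMonoid.isUnit_mul_iff, IsDedekindFiniteMonoid.isUnit_mul_iff, and_comm]
end

section
/- Every 2-ΔU ring is Dedekind-finite: if R is a 2-ΔU ring and a, b ∈ R satisfy a·b = 1, then b·a = 1. -/
/-- A ring `R` is a 2-ΔU ring if every unit `u` satisfies `u ^ 2 - 1 ∈ Δ(R)`. -/
def Is2DeltaU (R : Type*) [Ring R] : Prop := ∀ u : Rˣ, (u : R) ^ 2 - 1 ∈ Delta R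

/-!
If `a * b = 1`, then `f = 1 - b * a` is an idempotent and `f, f * a, b * f, b * f * a` form a system
of 2 × 2 matrix units. The unit of `R` that acts on their corner as the golden-ratio matrix
`M = !![0, 1; 1, 1]` satisfies `u - u⁻¹ = 1 - b ^ 2 * a ^ 2`, because `M ^ 2 = M + 1`. In a 2-ΔU ring
`u - u⁻¹ = u⁻¹ * (u ^ 2 - 1)` lies in `Δ(R)`, which contains no nonzero idempotent; hence
`b ^ 2 * a ^ 2 = 1`, and `b` is invertible.
-/

theorem mul_eq_one_symm_of_pow_two_mul_pow_two {M : Type*} [Monoid M] {a b : M}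
    (hab : a * b = 1) (h : b ^ 2 * a ^ 2 = 1) : b * a = 1 := by
  have hb : b * (b * a ^ 2) = 1 := by rwa [← mul_assoc, ← sq]
  rwa [left_inv_eq_right_inv hab hb]

theorem isIdempotentElem_mul_of_mul_eq_one {M : Type*} [Monoid M] {a b : M} (hab : a * b = 1) :
    IsIdempotentElem (b * a) := by
  rw [IsIdempotentElem, mul_assoc, ← mul_assoc a, hab, one_mul]

section Ring

variable {R : Type*} [Ring R]

theorem units_mul_mem_delta {r : R} (hr : r ∈ Delta R) (v : Rˣ) : (v : R) * r ∈ Delta R := by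
  intro u
  have hvu : (v : R) * r + u = v * (r + ↑(v⁻¹ * u)) := by
    rw [mul_add, Units.val_mul, ← mul_assoc, Units.mul_inv, one_mul]
  rw [hvu]
  exact v.isUnit.mul (hr _)

theorem IsIdempotentElem.eq_zero_of_mem_delta {e : R} (he : IsIdempotentElem e)
    (hΔ : e ∈ Delta R) : e = 0 := by
  have hunit : IsUnit (e - 1) := by simpa [sub_eq_add_neg] using hΔ (-1)
  have h0 : e * (e - 1) = 0 := by rw [mul_sub, he.eq, mul_one, sub_self]
  exact hunit.mul_left_eq_zero.mp h0

theorem Is2DeltaU.val_sub_inv_mem_delta (hR : Is2DeltaU R) (u : Rˣ) :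
    (u : R) - ↑u⁻¹ ∈ Delta R := by
  have h : (u : R) - ↑u⁻¹ = ↑u⁻¹ * ((u : R) ^ 2 - 1) := by
    rw [mul_sub, sq, ← mul_assoc, Units.inv_mul, one_mul, mul_one]
  rw [h]
  exact units_mul_mem_delta (hR u) u⁻¹

theorem exists_unit_val_sub_inv_eq_one_sub {a b : R} (hab : a * b = 1) :
    ∃ u : Rˣ, (u : R) - ↑u⁻¹ = 1 - b ^ 2 * a ^ 2 := by
  have hab' (x : R) : a * (b * x) = x := by rw [← mul_assoc, hab, one_mul]
  let u := b * a + (1 - b * a) * a + b * (1 - b * a)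
  refine ⟨⟨u, u - (1 - b ^ 2 * a ^ 2), ?_, ?_⟩, sub_sub_cancel _ _⟩ <;>
  · simp only [u, sq, mul_sub, sub_mul, mul_add, add_mul, mul_one, one_mul, mul_assoc, hab, hab']
    abel

theorem Is2DeltaU.isDedekindFiniteMonoid (hR : Is2DeltaU R) : IsDedekindFiniteMonoid R where
  mul_eq_one_symm {a b} hab := by
    obtain ⟨u, hu⟩ := exists_unit_val_sub_inv_eq_one_sub hab
    have hidem : IsIdempotentElem (1 - b ^ 2 * a ^ 2) :=
      (isIdempotentElem_mul_of_mul_eq_one (pow_mul_pow_eq_one 2 hab)).one_sub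
    have h0 := hidem.eq_zero_of_mem_delta (hu ▸ hR.val_sub_inv_mem_delta u)
    exact mul_eq_one_symm_of_pow_two_mul_pow_two hab (sub_eq_zero.mp h0).symm

end Ring

theorem is2DeltaU_dedekindFinite (R : Type*) [Ring R] (hR : Is2DeltaU R)
    (a b : R) (hab : a * b = 1) : b * a = 1 :=
  hR.isDedekindFiniteMonoid.mul_eq_one_symm hab
end

section
/- For a ring R the following are equivalent: (i) R is a semi-regular 2-ΔU ring; (ii) R is an exchange 2-ΔU ring; (iii) R is a semi-tripotent ring, i.e., every a ∈ R can be written as a = e + j where e³ = e and j ∈ J(R). -/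
/-- `R` is semi-regular: `R/J(R)` is von Neumann regular and idempotents lift mod `J(R)`. -/
def IsSemiregular (R : Type*) [Ring R] : Prop :=
  (∀ a : R, ∃ x : R, a - a * x * a ∈ Ideal.jacobson (⊥ : Ideal R)) ∧
  (∀ a : R, a - a ^ 2 ∈ Ideal.jacobson (⊥ : Ideal R) →
    ∃ e : R, e * e = e ∧ a - e ∈ Ideal.jacobson (⊥ : Ideal R))

/-- `R` is an exchange ring. -/
def IsExchange (R : Type*) [Ring R] : Prop :=
  ∀ a : R, ∃ e r s : R, e * e = e ∧ e = a * r ∧ 1 - e = (1 - a) * s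

/-!
Let `S = R/J(R)`. In any 2-ΔU ring, a regular `m ≠ 0` with `m² = 0` would give a system of
2 × 2 matrix units, and on their corner the unit `!![0, 1; 1, 1]` violates the 2-ΔU condition.
If `S` is exchange (or regular), such elements exist unless `S` is reduced, so the idempotents
of `S` are central and `S` is Dedekind-finite; exchange idempotents then give `Δ(S) = 0`, so all
units of `S` square to `1`. The exchange property splits each `a`, along a central idempotent
`e`, into a unit of `eS` and an element of `(1 - e)S` whose complement is a unit there; squaring
these units to `1` gives `6 = 0` (take `a = 3`) and then `a³ = a`. So `S` is tripotent, and
idempotents lift as `R` is exchange or semi-regular. Conversely, a tripotent `a` of `S` is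
`p - q` for the orthogonal idempotents `p = 2a² - a`, `q = 2a² - 2a`, which lift one after the
other by conjugating with units `1 + j`, `j ∈ J(R)`.
-/

section Jacobson

variable {R : Type*} [Ring R]

theorem isUnit_one_add_mul_comm {a b : R} : IsUnit (1 + a * b) ↔ IsUnit (1 + b * a) := by
  have h := spectrum.unit_mem_mul_comm (R := ℤ) (a := -a) (b := b) (r := 1)
  simpa [spectrum.mem_iff, sub_eq_add_neg] using h.not

theorem exists_mul_one_add_eq_one {y : R} (hy : y ∈ Ring.jacobson R) : ∃ z, z * (1 + y) = 1 := by
  rw [← Ideal.jacobson_bot] at hy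
  obtain ⟨z, hz⟩ := Ideal.mem_jacobson_iff.1 hy 1
  exact ⟨z, by simpa [sub_eq_zero, mul_add, add_comm] using hz⟩

theorem isUnit_one_add_of_mem_jacobson {x : R} (hx : x ∈ Ring.jacobson R) : IsUnit (1 + x) := by
  obtain ⟨z, hz⟩ := exists_mul_one_add_eq_one hx
  -- `z = 1 + (-z) x` has a left inverse as well, so `z` is a unit with inverse `1 + x`
  obtain ⟨w, hw⟩ := exists_mul_one_add_eq_one (Ideal.mul_mem_left _ (-z) hx)
  rw [show 1 + -z * x = z by rw [← hz]; noncomm_ring] at hw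
  exact isUnit_iff_exists.2 ⟨z, left_inv_eq_right_inv hw hz ▸ hw, hz⟩

theorem mem_jacobson_of_forall_isUnit {x : R} (h : ∀ y, IsUnit (1 + x * y)) :
    x ∈ Ring.jacobson R := by
  rw [← Ideal.jacobson_bot, Ideal.mem_jacobson_iff]
  intro y
  obtain ⟨u, hu⟩ := isUnit_one_add_mul_comm.1 (h y)
  exact ⟨↑u⁻¹, by rw [Ideal.mem_bot, sub_eq_zero, ← Units.inv_mul u, hu]; noncomm_ring⟩

instance : IsLocalHom (Ideal.Quotient.mk (Ring.jacobson R)) where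
  map_nonunit a ha := by
    obtain ⟨b, hab, hba⟩ := isUnit_iff_exists.1 ha
    have unit_of {c d : R} (h : Ideal.Quotient.mk (Ring.jacobson R) c *
        Ideal.Quotient.mk (Ring.jacobson R) d = 1) :
        IsUnit (c * d) := by
      rw [← map_mul, ← map_one (Ideal.Quotient.mk _), Ideal.Quotient.eq] at h
      simpa using isUnit_one_add_of_mem_jacobson h
    obtain ⟨b, rfl⟩ := Ideal.Quotient.mk_surjective b
    obtain ⟨u, hu⟩ := unit_of hab
    obtain ⟨v, hv⟩ := unit_of hba
    exact isUnit_iff_exists_and_exists.2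
      ⟨⟨b * ↑u⁻¹, by rw [← mul_assoc, ← hu, Units.mul_inv]⟩,
       ⟨↑v⁻¹ * b, by rw [mul_assoc, ← hv, Units.inv_mul]⟩⟩

theorem mem_delta_of_mem_jacobson {j : R} (hj : j ∈ Ring.jacobson R) :
    j ∈ Delta R := fun u ↦ by
  have h := u.isUnit.mul (isUnit_one_add_of_mem_jacobson (Ideal.mul_mem_left _ ↑u⁻¹ hj))
  rwa [mul_add, mul_one, Units.mul_inv_cancel_left, add_comm] at h

end Jacobson

section Transfer

variable {R S : Type*} [Ring R] [Ring S]

theorem map_mem_delta (f : R →+* S) [IsLocalHom f]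
    (hf : Function.Surjective f) {d : R} (hd : d ∈ Delta R) : f d ∈ Delta S := fun v ↦ by
  obtain ⟨y, hy⟩ := hf v
  obtain ⟨w, rfl⟩ := isUnit_of_map_unit f y (hy ▸ v.isUnit)
  simpa [hy] using (hd w).map f

theorem Is2DeltaU.of_surjective (f : R →+* S) [IsLocalHom f]
    (hf : Function.Surjective f) (h2 : Is2DeltaU R) : Is2DeltaU S := fun u ↦ by
  obtain ⟨x, hx⟩ := hf u
  obtain ⟨w, rfl⟩ := isUnit_of_map_unit f x (hx ▸ u.isUnit)
  simpa [hx] using map_mem_delta f hf (h2 w)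

theorem IsExchange.of_surjective (f : R →+* S)
    (hf : Function.Surjective f) (hex : IsExchange R) : IsExchange S := fun b ↦ by
  obtain ⟨a, rfl⟩ := hf b
  obtain ⟨e, r, s, he, hr, hs⟩ := hex a
  exact ⟨f e, f r, f s, by rw [← map_mul, he], by rw [hr, map_mul],
    by rw [← map_one f, ← map_sub, hs, map_mul, map_sub]⟩

end Transfer

section

variable {S : Type*} [Ring S]

theorem Is2DeltaU.isUnit_sq_sub_one_sub (h2 : Is2DeltaU S) (u : Sˣ) :
    IsUnit ((u : S) ^ 2 - 1 - u) := by
  simpa [sub_eq_add_neg] using h2 u (-u)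

theorem Is2DeltaU.eq_zero_of_mul_self_eq_zero (h2 : Is2DeltaU S) {m x : S} (hm : m * m = 0)
    (hreg : m * x * m = m) : m = 0 := by
  have hm' (y : S) : m * (m * y) = 0 := by rw [← mul_assoc, hm, zero_mul]
  have hreg' : m * (x * m) = m := by rw [← mul_assoc, hreg]
  have hreg'' (y : S) : m * (x * (m * y)) = m * y := by rw [← mul_assoc x, ← mul_assoc, hreg']
  -- `m x`, `f`, `m`, `n` form a system of 2 × 2 matrix units with identity `p`; `w` is
  -- `!![0, 1; 1, 1]` on the corner of `p` and the identity on that of `1 - p`.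
  set f := x * m - m * x * x * m
  set n := x * m * x - m * x * x * m * x
  set p := m * x + f
  set w := 1 - m * x + m + n
  have key : IsIdempotentElem p ∧ w * (w - p) = 1 ∧ (w - p) * w = 1 ∧
      w ^ 2 - 1 - w = -(1 - p) ∧ p * (m * x) = m * x := by
    refine ⟨?_, ?_, ?_, ?_, ?_⟩ <;>
    · simp only [IsIdempotentElem, sq, w, p, f, n, mul_add, add_mul, mul_sub, sub_mul, mul_assoc,
        hm, hm', hreg', hreg'', mul_zero, one_mul, mul_one]
      abel
  obtain ⟨hp, hw, hw', hwp, hpe⟩ := key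
  have hunit := h2.isUnit_sq_sub_one_sub ⟨w, w - p, hw, hw'⟩
  rw [Units.val_mk, hwp, IsUnit.neg_iff] at hunit
  have hp0 : p = 0 := by simpa using (IsIdempotentElem.iff_eq_one_of_isUnit hunit).1 hp.one_sub
  rw [← hreg, ← hpe, hp0, zero_mul, zero_mul]

theorem IsIdempotentElem.commute_of_isReduced [IsReduced S] {e : S} (he : IsIdempotentElem e)
    (r : S) : Commute e r := by
  have h₁ : (1 - e) * e = 0 := by rw [sub_mul, one_mul, he.eq, sub_self]
  have h₂ : e * (1 - e) = 0 := by rw [mul_sub, mul_one, he.eq, sub_self]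
  have hl : e * r * (1 - e) = 0 := eq_zero_of_pow_eq_zero (n := 2) <| by
    rw [show (e * r * (1 - e)) ^ 2 = e * r * ((1 - e) * e) * r * (1 - e) by noncomm_ring, h₁]
    simp
  have hr : (1 - e) * r * e = 0 := eq_zero_of_pow_eq_zero (n := 2) <| by
    rw [show ((1 - e) * r * e) ^ 2 = (1 - e) * r * (e * (1 - e)) * r * e by noncomm_ring, h₂]
    simp
  calc e * r = e * r * e := by rw [← sub_eq_zero, ← hl]; noncomm_ring
    _ = r * e := by rw [← sub_eq_zero, ← neg_eq_zero, ← hr]; noncomm_ring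

theorem isDedekindFiniteMonoid_of_isReduced [IsReduced S] : IsDedekindFiniteMonoid S := by
  refine ⟨fun {x y} hxy ↦ ?_⟩
  have hg : IsIdempotentElem (1 - y * x) :=
    IsIdempotentElem.one_sub (by rw [IsIdempotentElem, mul_assoc, ← mul_assoc x, hxy, one_mul])
  have hx : x * (1 - y * x) = 0 := by rw [mul_sub, ← mul_assoc, hxy, one_mul, mul_one, sub_self]
  have : 1 - y * x = 0 := by
    calc 1 - y * x = (1 - y * x) * (x * y) := by rw [hxy, mul_one]
      _ = x * (1 - y * x) * y := by rw [← mul_assoc, (hg.commute_of_isReduced x).eq]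
      _ = 0 := by rw [hx, zero_mul]
  exact (sub_eq_zero.1 this).symm

theorem IsExchange.exists_isIdempotentElem_ne_zero (hex : IsExchange S) {a : S}
    (ha : ¬IsUnit (1 - a)) : ∃ c, IsIdempotentElem (a * c) ∧ a * c ≠ 0 := by
  obtain ⟨e, r, s, he, rfl, hs⟩ := hex a
  by_cases he0 : a * r = 0
  swap
  · exact ⟨r, he, he0⟩
  rw [he0, sub_zero] at hs
  -- `s` is a right inverse of the non-unit `1 - a`, so the idempotent `1 - s (1 - a)` is nonzero
  have hg : IsIdempotentElem (s * (1 - a)) := by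
    rw [IsIdempotentElem, mul_assoc, ← mul_assoc (1 - a), ← hs, one_mul]
  have hne : 1 - s * (1 - a) ≠ 0 := fun h ↦
    ha (isUnit_iff_exists.2 ⟨s, hs.symm, (sub_eq_zero.1 h).symm⟩)
  have h0 : (1 - a) * (1 - s * (1 - a)) = 0 := by
    rw [mul_sub, mul_one, ← mul_assoc, ← hs, one_mul, sub_self]
  have hfix : a * (1 - s * (1 - a)) = 1 - s * (1 - a) := by
    rw [← sub_eq_zero, ← neg_eq_zero, ← h0]; noncomm_ring
  exact ⟨1 - s * (1 - a), by rw [hfix]; exact hg.one_sub, by rwa [hfix]⟩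

theorem exists_isIdempotentElem_ne_zero_mul (hJ : Ring.jacobson S = ⊥) (hex : IsExchange S)
    {d : S} (hd : d ≠ 0) : ∃ c, IsIdempotentElem (d * c) ∧ d * c ≠ 0 := by
  obtain ⟨y, hy⟩ : ∃ y, ¬IsUnit (1 + d * y) := by
    by_contra! h
    exact hd (by simpa [hJ] using mem_jacobson_of_forall_isUnit h)
  obtain ⟨c, hc⟩ := hex.exists_isIdempotentElem_ne_zero (a := -(d * y)) (by rwa [sub_neg_eq_add])
  exact ⟨-(y * c), by simpa [mul_assoc] using hc⟩

theorem Is2DeltaU.isReduced_of_regular (h2 : Is2DeltaU S) (hreg : ∀ a : S, ∃ x, a * x * a = a) :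
    IsReduced S :=
  (isReduced_iff_pow_one_lt 2 one_lt_two).2 fun m hm ↦
    have ⟨_, hx⟩ := hreg m
    h2.eq_zero_of_mul_self_eq_zero (by rwa [← sq]) hx

theorem Is2DeltaU.isReduced_of_exchange (hJ : Ring.jacobson S = ⊥) (h2 : Is2DeltaU S)
    (hex : IsExchange S) : IsReduced S := by
  refine (isReduced_iff_pow_one_lt 2 one_lt_two).2 fun n hn ↦ ?_
  rw [sq] at hn
  by_contra hn0
  obtain ⟨c, hc, hc0⟩ := exists_isIdempotentElem_ne_zero_mul hJ hex hn0
  have hm : n * c * n * (n * c * n) = 0 := by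
    rw [show n * c * n * (n * c * n) = n * c * (n * n) * c * n by noncomm_ring, hn]; simp
  have hreg : n * c * n * c * (n * c * n) = n * c * n := by
    rw [show n * c * n * c * (n * c * n) = (n * c) * (n * c) * (n * c) * n by noncomm_ring,
      hc.eq, hc.eq]
  have hm0 := h2.eq_zero_of_mul_self_eq_zero hm hreg
  exact hc0 (by rw [← hc.eq, ← mul_assoc, hm0, zero_mul])

theorem IsExchange.of_regular [IsReduced S] (hreg : ∀ a : S, ∃ x, a * x * a = a) :
    IsExchange S := fun a ↦ by
  obtain ⟨x, hx⟩ := hreg a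
  have he : IsIdempotentElem (a * x) := by rw [IsIdempotentElem, ← mul_assoc, hx]
  refine ⟨a * x, x, 1 - a * x, he, rfl, ?_⟩
  have hea : a * (a * x) = a := by rw [← (he.commute_of_isReduced a).eq, hx]
  rw [sub_mul, one_mul, mul_sub, mul_one, hea]; abel

theorem eq_zero_of_mem_delta [IsReduced S] (hJ : Ring.jacobson S = ⊥) (hex : IsExchange S)
    {d : S} (hd : d ∈ Delta S) : d = 0 := by
  have := isDedekindFiniteMonoid_of_isReduced (S := S)
  by_contra hd0
  obtain ⟨c, hh, hh0⟩ := exists_isIdempotentElem_ne_zero_mul hJ hex hd0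
  set h := d * c
  -- `X = d h + (1 - h)` is a unit with `(d - X) h = 0`, and `d - X` is a unit as `d ∈ Δ(S)`
  have hX : (d * h + (1 - h)) * (h * c + (1 - h)) = 1 := by
    have hdh : d * h * c = h := by rw [← (hh.commute_of_isReduced d).eq, mul_assoc, hh.eq]
    calc (d * h + (1 - h)) * (h * c + (1 - h))
        = d * (h * h) * c + d * h - d * (h * h) + h * c + 1 - h - (h * h) * c - h + h * h := by
          noncomm_ring
      _ = 1 := by rw [hh.eq, hdh]; abel
  obtain ⟨u, hu⟩ := IsUnit.of_mul_eq_one _ hX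
  have hunit : IsUnit (d + ↑(-u)) := hd (-u)
  rw [Units.val_neg, hu] at hunit
  refine hh0 (hunit.mul_right_eq_zero.1 ?_)
  calc (d + -(d * h + (1 - h))) * h = (d - 1) * (h - h * h) := by noncomm_ring
    _ = 0 := by rw [hh.eq, sub_self, mul_zero]

theorem sq_mul_eq_of_eq_mul [IsReduced S] (hsq : ∀ u : Sˣ, (u : S) ^ 2 = 1) {b e r : S}
    (he : IsIdempotentElem e) (hbr : e = b * r) : b ^ 2 * e = e := by
  have := isDedekindFiniteMonoid_of_isReduced (S := S)
  have hb := (he.commute_of_isReduced b).left_comm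
  have hr := (he.commute_of_isReduced r).left_comm
  have hbr' (y : S) : b * (r * y) = e * y := by rw [hbr, mul_assoc]
  have hX : (b * e + (1 - e)) * (r * e + (1 - e)) = 1 := by
    simp only [mul_add, add_mul, mul_sub, sub_mul, mul_one, one_mul, mul_assoc, hr, hbr', he.eq]
    abel
  obtain ⟨u, hu⟩ := IsUnit.of_mul_eq_one _ hX
  have hsq' : (b * e + (1 - e)) ^ 2 = b ^ 2 * e + (1 - e) := by
    simp only [sq, mul_add, add_mul, mul_sub, sub_mul, mul_one, one_mul, mul_assoc, hb, he.eq]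
    abel
  have := hsq u
  rw [hu, hsq'] at this
  linear_combination (norm := noncomm_ring) this

theorem six_eq_zero [IsReduced S] (hex : IsExchange S) (hsq : ∀ u : Sˣ, (u : S) ^ 2 = 1) :
    (6 : S) = 0 := by
  obtain ⟨e, r, s, (he : IsIdempotentElem e), hr, hs⟩ := hex 3
  have h9 := sq_mul_eq_of_eq_mul hsq he hr
  have h4 := sq_mul_eq_of_eq_mul hsq he.one_sub hs
  have h2e : 2 * e = 0 := eq_zero_of_pow_eq_zero (n := 3) <| by
    linear_combination (norm := noncomm_ring) (8 * e + 8) * he.eq + h9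
  have h3e : 3 * (1 - e) = 0 := by linear_combination (norm := noncomm_ring) h4
  calc (6 : S) = 3 * (2 * e) + 2 * (3 * (1 - e)) := by noncomm_ring; norm_num
    _ = 0 := by rw [h2e, h3e]; simp

theorem pow_three_eq_self_of_sq_eq_one [IsReduced S] (hex : IsExchange S)
    (hsq : ∀ u : Sˣ, (u : S) ^ 2 = 1) (a : S) : a ^ 3 = a := by
  obtain ⟨e, r, s, (he : IsIdempotentElem e), hr, hs⟩ := hex a
  have ha := sq_mul_eq_of_eq_mul hsq he hr
  have h1a := sq_mul_eq_of_eq_mul hsq he.one_sub hs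
  have hcomm := (he.one_sub.commute_of_isReduced a).eq
  have h3 : 3 * (a * (1 - e)) = 0 := eq_zero_of_pow_eq_zero (n := 2) <| by
    calc (3 * (a * (1 - e))) ^ 2 = 9 * (a * ((1 - e) * a) * (1 - e)) := by noncomm_ring
      _ = 9 * (a ^ 2 * ((1 - e) * (1 - e))) := by rw [hcomm]; noncomm_ring
      _ = 9 * ((1 - a) ^ 2 * (1 - e) - (1 - e)) + 3 * 6 * (a * (1 - e)) := by
        rw [he.one_sub.eq]; noncomm_ring
      _ = 0 := by rw [h1a, six_eq_zero hex hsq, sub_self]; simp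
  linear_combination (norm := noncomm_ring) a * ha + (a + 2) * h1a + h3

theorem Is2DeltaU.pow_three_eq_self (hJ : Ring.jacobson S = ⊥) (h2 : Is2DeltaU S)
    (hex : IsExchange S) (a : S) : a ^ 3 = a :=
  have := h2.isReduced_of_exchange hJ hex
  pow_three_eq_self_of_sq_eq_one hex (fun u ↦ sub_eq_zero.1 (eq_zero_of_mem_delta hJ hex (h2 u))) a

theorem IsIdempotentElem.sq_of_pow_three_eq_self {M : Type*} [Monoid M] {x : M} (h : x ^ 3 = x) :
    IsIdempotentElem (x ^ 2) := by
  rw [IsIdempotentElem, ← pow_add, show 2 + 2 = 3 + 1 from rfl, pow_succ, h, ← sq]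

theorem IsIdempotentElem.sub_pow_three {p q : S} (hp : IsIdempotentElem p) (hq : IsIdempotentElem q)
    (hpq : p * q = 0) (hqp : q * p = 0) : (p - q) ^ 3 = p - q := by
  simp only [pow_succ, pow_zero, one_mul, mul_sub, sub_mul, hp.eq, hq.eq, hpq, hqp, zero_mul]
  abel

theorem exists_orthogonal_idempotents_sub_eq (h : ∀ x : S, x ^ 3 = x) (a : S) :
    ∃ p q : S, IsIdempotentElem p ∧ IsIdempotentElem q ∧ p * q = 0 ∧ q * p = 0 ∧ p - q = a := by
  -- `S ≅ S/2S × S/3S` as `6 = 0`, and the components of `p` and `q` are `a, 0` and `(a² ± a) / 2`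
  refine ⟨2 * a ^ 2 - a, 2 * a ^ 2 - 2 * a, ?_, ?_, ?_, ?_, by noncomm_ring⟩
  · rw [IsIdempotentElem]
    linear_combination (norm := noncomm_ring) (4 * a - 4) * h a + h (a + 1) - h a - a * h 2
  · rw [IsIdempotentElem]
    linear_combination (norm := noncomm_ring) (4 * a - 8) * h a + (a ^ 2 - a) * h 2
  · linear_combination (norm := noncomm_ring) (4 * a - 6) * h a + (a ^ 2 - a) * h 2
  · linear_combination (norm := noncomm_ring) (4 * a - 6) * h a + (a ^ 2 - a) * h 2

end

section Quotient

variable {R : Type*} [Ring R]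

theorem sub_mem_jacobson_bot_iff {x y : R} :
    x - y ∈ Ideal.jacobson (⊥ : Ideal R) ↔
      Ideal.Quotient.mk (Ring.jacobson R) x = Ideal.Quotient.mk (Ring.jacobson R) y := by
  rw [Ideal.jacobson_bot, Ideal.Quotient.eq]

def IdempotentsLift {S : Type*} [Ring S] (f : R →+* S) : Prop :=
  ∀ s : S, IsIdempotentElem s → ∃ e : R, IsIdempotentElem e ∧ f e = s

local notation "π" => Ideal.Quotient.mk (Ring.jacobson R)

theorem isSemiregular_iff :
    IsSemiregular R ↔ (∀ s : R ⧸ Ring.jacobson R, ∃ x, s * x * s = s) ∧ IdempotentsLift π := by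
  simp only [IsSemiregular, sub_mem_jacobson_bot_iff, map_mul, map_pow]
  refine ⟨fun ⟨hreg, hl⟩ ↦ ⟨fun s ↦ ?_, fun s hs ↦ ?_⟩,
    fun ⟨hreg, hl⟩ ↦ ⟨fun a ↦ ?_, fun a ha ↦ ?_⟩⟩
  · obtain ⟨a, rfl⟩ := Ideal.Quotient.mk_surjective s
    obtain ⟨x, hx⟩ := hreg a
    exact ⟨π x, hx.symm⟩
  · obtain ⟨a, rfl⟩ := Ideal.Quotient.mk_surjective s
    obtain ⟨e, he, hae⟩ := hl a (by rw [sq, hs.eq])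
    exact ⟨e, he, hae.symm⟩
  · obtain ⟨x, hx⟩ := hreg (π a)
    obtain ⟨x, rfl⟩ := Ideal.Quotient.mk_surjective x
    exact ⟨x, hx.symm⟩
  · obtain ⟨e, he, hae⟩ := hl (π a) (by rw [IsIdempotentElem, ← sq, ← ha])
    exact ⟨e, he, hae.symm⟩

theorem IsExchange.idempotentsLift (hex : IsExchange R) : IdempotentsLift π := fun s hs ↦ by
  obtain ⟨a, rfl⟩ := Ideal.Quotient.mk_surjective s
  obtain ⟨e, r, t, he, hr, ht⟩ := hex a
  refine ⟨e, he, ?_⟩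
  have h₁ : π a * (1 - π a) = 0 := by rw [mul_sub, mul_one, hs.eq, sub_self]
  have h₂ : (1 - π a) * π a = 0 := by rw [sub_mul, one_mul, hs.eq, sub_self]
  have hr' := congrArg π hr
  have ht' := congrArg π ht
  simp only [map_mul, map_sub, map_one] at hr' ht'
  rw [← sub_eq_zero]
  calc π e - π a = -(π a * (1 - π e)) + (1 - π a) * π e := by noncomm_ring
    _ = 0 := by rw [ht', hr', ← mul_assoc, ← mul_assoc, h₁, h₂]; simp

theorem exists_isIdempotentElem_mk_eq_mul {e t : R} (he : IsIdempotentElem e) (het : π e = π t) :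
    ∃ f, IsIdempotentElem f ∧ π f = π t ∧ (∃ x, f = t * x) ∧ ∃ y, 1 - f = (1 - e) * y := by
  have hj : (t - e) * e ∈ Ring.jacobson R := Ideal.mul_mem_right _ _ <| by
    rw [← Ideal.Quotient.eq_zero_iff_mem, map_sub, het, sub_self]
  -- conjugating by `u = 1 + (t - e) e` moves `e` into `t R`, as `u e = t e` and `u (1 - e) = 1 - e`
  obtain ⟨u, hu⟩ := isUnit_one_add_of_mem_jacobson hj
  have hue : ↑u * e = t * e := by
    rw [hu, ← sub_eq_zero]
    calc (1 + (t - e) * e) * e - t * e = (t - e - 1) * (e * e - e) := by noncomm_ring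
      _ = 0 := by rw [he.eq, sub_self, mul_zero]
  have hu1 : ↑u * (1 - e) = 1 - e := by
    rw [hu, ← sub_eq_zero]
    calc (1 + (t - e) * e) * (1 - e) - (1 - e) = (t - e) * (e - e * e) := by noncomm_ring
      _ = 0 := by rw [he.eq, sub_self, mul_zero]
  have hπu : π ↑u = 1 := by rw [hu, map_add, map_one, map_mul, map_sub, het, sub_self, zero_mul,
    add_zero]
  have hπu' : π ↑u⁻¹ = 1 := by
    have h := congrArg π u.inv_mul
    rwa [map_mul, hπu, mul_one, map_one] at h
  refine ⟨u * e * ↑u⁻¹, ?_, ?_, ⟨e * ↑u⁻¹, by rw [hue, mul_assoc]⟩, ⟨↑u⁻¹, ?_⟩⟩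
  · simp only [IsIdempotentElem, mul_assoc, Units.inv_mul_cancel_left]
    rw [← mul_assoc e e, he.eq]
  · rw [map_mul, map_mul, hπu, hπu', one_mul, mul_one, het]
  · rw [← hu1, mul_sub, mul_one, sub_mul, Units.mul_inv]

theorem exists_pow_three_eq_self_mk_eq (hl : IdempotentsLift π)
    (hS : ∀ s : R ⧸ Ring.jacobson R, s ^ 3 = s) (a : R) : ∃ e : R, e ^ 3 = e ∧ π e = π a := by
  obtain ⟨P, Q, hP, hQ, hPQ, hQP, hPQa⟩ := exists_orthogonal_idempotents_sub_eq hS (π a)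
  obtain ⟨p, hp, rfl⟩ := hl P hP
  obtain ⟨e₁, he₁, hπe₁⟩ := hl Q hQ
  obtain ⟨t, rfl⟩ := Ideal.Quotient.mk_surjective Q
  -- lift `Q` into `(1 - p) R`, then cut it down to an idempotent orthogonal to `p`
  have hπt : π e₁ = π ((1 - p) * t * (1 - p)) := by
    simp only [map_mul, map_sub, sub_mul, mul_sub, one_mul, mul_one, hPQ, hQP, hπe₁,
      zero_mul, sub_zero]
  obtain ⟨f, hf, hπf, ⟨x, hfx⟩, -⟩ := exists_isIdempotentElem_mk_eq_mul he₁ hπt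
  have hp1 : p * (1 - p) = 0 := by rw [mul_sub, mul_one, hp.eq, sub_self]
  have hpf : p * f = 0 := by simp only [hfx, ← mul_assoc, hp1, zero_mul]
  have hq : IsIdempotentElem (f * (1 - p)) := by
    rw [IsIdempotentElem, mul_assoc, ← mul_assoc (1 - p), sub_mul, one_mul, hpf, sub_zero,
      ← mul_assoc, hf.eq]
  refine ⟨p - f * (1 - p), hp.sub_pow_three hq ?_ ?_, ?_⟩
  · rw [← mul_assoc, hpf, zero_mul]
  · rw [mul_assoc, sub_mul, one_mul, hp.eq, sub_self, mul_zero]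
  · rw [map_sub, map_mul, hπf, ← hPQa]
    simp only [map_mul, map_sub, map_one, sub_mul, mul_sub, one_mul, mul_one, hPQ, hQP,
      zero_mul, sub_zero, sub_self]

theorem IsExchange.of_idempotentsLift (hl : IdempotentsLift π)
    (hS : ∀ s : R ⧸ Ring.jacobson R, s ^ 3 = s) : IsExchange R := fun a ↦ by
  -- an idempotent `E ∈ a² R` with `1 - E ∈ (1 - a²) R`, lifted from `π a ^ 2`
  obtain ⟨e, he, hπe⟩ := hl (π (a ^ 2)) <| by
    rw [map_pow]; exact .sq_of_pow_three_eq_self (hS (π a))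
  obtain ⟨f, hf, hπf, ⟨x, hfx⟩, -⟩ := exists_isIdempotentElem_mk_eq_mul he hπe
  obtain ⟨g, hg, -, ⟨y, hgy⟩, ⟨z, hgz⟩⟩ := exists_isIdempotentElem_mk_eq_mul (t := 1 - a ^ 2)
    hf.one_sub (by rw [map_sub, map_sub, hπf])
  refine ⟨1 - g, a * (x * z), (1 + a) * y, hg.one_sub, ?_, ?_⟩
  · rw [hgz, sub_sub_cancel, hfx, sq]; noncomm_ring
  · rw [sub_sub_cancel, hgy]; noncomm_ring

def IsSemiTripotent (R : Type*) [Ring R] : Prop :=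
  ∀ a : R, ∃ e j : R, e ^ 3 = e ∧ j ∈ Ideal.jacobson (⊥ : Ideal R) ∧ a = e + j

theorem isSemiTripotent_iff :
    IsSemiTripotent R ↔ (∀ s : R ⧸ Ring.jacobson R, s ^ 3 = s) ∧ IdempotentsLift π := by
  refine ⟨fun h ↦ ?_, fun ⟨hS, hl⟩ a ↦ ?_⟩
  · have h' (s : R ⧸ Ring.jacobson R) : ∃ e, e ^ 3 = e ∧ π e = s := by
      obtain ⟨a, rfl⟩ := Ideal.Quotient.mk_surjective s
      obtain ⟨e, j, he, hj, rfl⟩ := h a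
      exact ⟨e, he, (sub_mem_jacobson_bot_iff.1 (by simpa using hj)).symm⟩
    refine ⟨fun s ↦ ?_, fun s hs ↦ ?_⟩ <;> obtain ⟨e, he, rfl⟩ := h' s
    · rw [← map_pow, he]
    · exact ⟨e ^ 2, .sq_of_pow_three_eq_self he, by rw [map_pow, sq, hs.eq]⟩
  · obtain ⟨e, he, hπe⟩ := exists_pow_three_eq_self_mk_eq hl hS a
    exact ⟨e, a - e, he, sub_mem_jacobson_bot_iff.2 hπe.symm, by abel⟩

theorem Is2DeltaU.of_pow_three_eq_self (hS : ∀ s : R ⧸ Ring.jacobson R, s ^ 3 = s) :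
    Is2DeltaU R := fun u ↦ by
  apply mem_delta_of_mem_jacobson
  rw [← Ideal.Quotient.eq_zero_iff_mem, map_sub, map_pow, map_one, sub_eq_zero]
  have h := hS (π u)
  rwa [pow_succ, (u.isUnit.map π).mul_eq_right] at h

end Quotient

theorem semiregular_is2DeltaU_tfae (R : Type*) [Ring R] :
    List.TFAE
      [IsSemiregular R ∧ Is2DeltaU R,
       IsExchange R ∧ Is2DeltaU R,
       ∀ a : R, ∃ e j : R, e ^ 3 = e ∧ j ∈ Ideal.jacobson (⊥ : Ideal R) ∧ a = e + j] := by
  have hJ := Ring.jacobson_quotient_jacobson R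
  have hπ := Ideal.Quotient.mk_surjective (I := Ring.jacobson R)
  tfae_have 1 → 3
  | ⟨hsr, h2⟩ => by
    obtain ⟨hreg, hl⟩ := isSemiregular_iff.1 hsr
    have h2' := h2.of_surjective _ hπ
    have := h2'.isReduced_of_regular hreg
    exact isSemiTripotent_iff.2 ⟨h2'.pow_three_eq_self hJ (.of_regular hreg), hl⟩
  tfae_have 2 → 3
  | ⟨hex, h2⟩ => isSemiTripotent_iff.2
    ⟨(h2.of_surjective _ hπ).pow_three_eq_self hJ (hex.of_surjective _ hπ), hex.idempotentsLift⟩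
  tfae_have 3 → 1 := fun h ↦
    have ⟨hS, hl⟩ := isSemiTripotent_iff.1 h
    ⟨isSemiregular_iff.2 ⟨fun s ↦ ⟨s, by rw [← pow_three', hS]⟩, hl⟩, .of_pow_three_eq_self hS⟩
  tfae_have 3 → 2 := fun h ↦
    have ⟨hS, hl⟩ := isSemiTripotent_iff.1 h
    ⟨.of_idempotentsLift hl hS, .of_pow_three_eq_self hS⟩
  tfae_finish
end
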